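/- For n ≥ k ≥ 0 and m ≥ 1, the hook principal specialization factors as S_{(m,1^k)}(1,t,...,t^n) = [n+m choose n-k]_{q,t} · φ^{n-k}( ∏_{i=1}^{k} (t^{q^{m+k}} - t^{q^i})/(t^{q^i} - t) ), where φ is t ↦ t^q. In particular S_{(m,1^k)}(1,t,...,t^n) = [n+m choose n-k]_{q,t} · φ^{n-k}(S_{(m,1^k)}(1,t,...,t^k)). -/

import Mathlib

/-!
With `u a = t ^ q ^ a` and `d = n - k`, the hook specialization is the quotient of the
Vandermonde product on the nodes `u 0, …, u (d - 1), u (d + 1), …, u n, u (n + m)` by the one on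
`u 0, …, u n`: the node `u d` is replaced by `u (n + m)`. Deleting `u d` from both products leaves
`∏_{i ≠ d} (u (n + m) - u i) / ± (u d - u i)`; the factors with `i < d` form the
`(q,t)`-binomial, and those with `i > d` are the same quotient for `n = k`, evaluated at
`t ^ q ^ d`.
-/

noncomputable section

/-- The principal specialization `S_λ(1, t, …, t^{N-1})` via the Vandermonde product. -/
def Sspec (q N : ℕ) (lam : ℕ → ℕ) (t : RatFunc ℚ) : RatFunc ℚ :=
  ∏ j ∈ Finset.range N, ∏ i ∈ Finset.range j,
    (t ^ q ^ (lam (N - j) + j) - t ^ q ^ (lam (N - i) + i)) / (t ^ q ^ j - t ^ q ^ i)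

/-- The hook partition `(m, 1^k)`, as a 1-indexed sequence of parts. -/
def hookLam (m k : ℕ) : ℕ → ℕ := fun i => if i = 1 then m else if i ≤ k + 1 then 1 else 0

/-- The (q,t)-binomial `[N choose k]_{q,t}` in product form, as a function of `t`. -/
def qtbin (q N k : ℕ) (t : RatFunc ℚ) : RatFunc ℚ :=
  ∏ i ∈ Finset.range k, (1 - t ^ (q ^ N - q ^ i)) / (1 - t ^ (q ^ k - q ^ i))

open Finset

def succAboveNat (d i : ℕ) : ℕ := if i < d then i else i + 1

lemma succAboveNat_of_lt {d i : ℕ} (h : i < d) : succAboveNat d i = i := if_pos h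

lemma succAboveNat_add (d i : ℕ) : succAboveNat d (d + i) = d + i + 1 :=
  if_neg (by omega)

lemma succAboveNat_injective (d : ℕ) : Function.Injective (succAboveNat d) := by
  intro a b h
  unfold succAboveNat at h
  split_ifs at h <;> omega

lemma prod_range_succ_eq_mul_prod_succAboveNat {M : Type*} [CommMonoid M] (f : ℕ → M)
    (d k : ℕ) :
    ∏ i ∈ range (d + k + 1), f i = f d * ∏ i ∈ range (d + k), f (succAboveNat d i) := by
  have hlow : ∏ i ∈ range d, f (succAboveNat d i) = ∏ i ∈ range d, f i :=
    prod_congr rfl fun i hi => by rw [succAboveNat_of_lt (mem_range.mp hi)]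
  rw [add_assoc, prod_range_add f d (k + 1), prod_range_succ', prod_range_add _ d k, hlow]
  simp only [succAboveNat_add, add_zero, add_assoc]
  ac_rfl

section Vandermonde

variable {R : Type*} [CommRing R]

def vandermondeProd (v : ℕ → R) (N : ℕ) : R :=
  ∏ j ∈ range N, ∏ i ∈ range j, (v j - v i)

lemma vandermondeProd_succ (v : ℕ → R) (N : ℕ) :
    vandermondeProd v (N + 1) = vandermondeProd v N * ∏ i ∈ range N, (v N - v i) :=
  prod_range_succ _ _

lemma vandermondeProd_congr {v w : ℕ → R} {N : ℕ} (h : ∀ i < N, v i = w i) :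
    vandermondeProd v N = vandermondeProd w N :=
  prod_congr rfl fun j hj => prod_congr rfl fun i hi => by
    have hj := mem_range.mp hj
    rw [h j hj, h i ((mem_range.mp hi).trans hj)]

lemma vandermondeProd_ne_zero [IsDomain R] {v : ℕ → R} (hv : Function.Injective v) (N : ℕ) :
    vandermondeProd v N ≠ 0 :=
  prod_ne_zero_iff.mpr fun _ _ => prod_ne_zero_iff.mpr fun _ hi =>
    sub_ne_zero.mpr (hv.ne (mem_range.mp hi).ne')

lemma vandermondeProd_eq_comp_succAboveNat_mul (v : ℕ → R) (d k : ℕ) :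
    vandermondeProd v (d + k + 1) = vandermondeProd (v ∘ succAboveNat d) (d + k) *
      ((∏ i ∈ range d, (v d - v i)) * ∏ i ∈ range k, (v (d + i + 1) - v d)) := by
  induction k with
  | zero =>
    rw [add_zero, vandermondeProd_succ, prod_range_zero, mul_one,
      vandermondeProd_congr (v := v ∘ succAboveNat d) (w := v) fun i hi =>
        congrArg v (succAboveNat_of_lt hi)]
  | succ k ih =>
    rw [vandermondeProd_succ, ← add_assoc, ih, vandermondeProd_succ,
      prod_range_succ_eq_mul_prod_succAboveNat (fun i => v (d + k + 1) - v i),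
      prod_range_succ _ k]
    simp only [Function.comp_apply, succAboveNat_add]
    ring

/-- Replacing the node `v d` of `v 0, …, v (d + k)` by `v M`. -/
lemma vandermondeProd_comp_div_vandermondeProd {K : Type*} [Field K] {v : ℕ → K}
    (hv : Function.Injective v) {e : ℕ → ℕ} {d k M : ℕ}
    (he : ∀ j < d + k, e j = succAboveNat d j) (heM : e (d + k) = M) :
    vandermondeProd (v ∘ e) (d + k + 1) / vandermondeProd v (d + k + 1) =
      (∏ i ∈ range d, (v M - v i) / (v d - v i)) *
        ∏ i ∈ range k, (v M - v (d + i + 1)) / (v (d + i + 1) - v d) := by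
  have hnodes : ∏ i ∈ range (d + k), (v M - v (e i)) =
      (∏ i ∈ range d, (v M - v i)) * ∏ i ∈ range k, (v M - v (d + i + 1)) := by
    rw [prod_congr rfl fun i hi => by rw [he i (mem_range.mp hi)], prod_range_add]
    congr 1
    · exact prod_congr rfl fun i hi => by rw [succAboveNat_of_lt (mem_range.mp hi)]
    · simp only [succAboveNat_add]
  rw [vandermondeProd_succ, Function.comp_apply, heM]
  simp only [Function.comp_apply]
  rw [hnodes, vandermondeProd_congr (v := v ∘ e) (w := v ∘ succAboveNat d)
      fun j hj => congrArg v (he j hj),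
    vandermondeProd_eq_comp_succAboveNat_mul,
    mul_div_mul_left _ _ (vandermondeProd_ne_zero (hv.comp (succAboveNat_injective d)) _),
    mul_div_mul_comm, prod_div_distrib, prod_div_distrib]

end Vandermonde

lemma Sspec_eq_div (q N : ℕ) (lam : ℕ → ℕ) (t : RatFunc ℚ) :
    Sspec q N lam t = vandermondeProd (fun j => t ^ q ^ (lam (N - j) + j)) N /
      vandermondeProd (fun a => t ^ q ^ a) N := by
  simp only [Sspec, vandermondeProd, ← prod_div_distrib]

lemma hookLam_add_of_lt {m d k j : ℕ} (hj : j < d + k) :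
    hookLam m k (d + k + 1 - j) + j = succAboveNat d j := by
  simp only [hookLam, succAboveNat]
  split_ifs <;> omega

lemma hookLam_add_last (m d k : ℕ) : hookLam m k (d + k + 1 - (d + k)) + (d + k) = d + k + m := by
  simp only [hookLam, add_tsub_cancel_left, ↓reduceIte]
  omega

lemma Sspec_hookLam {q : ℕ} {t : RatFunc ℚ} (ht : Function.Injective fun a => t ^ q ^ a)
    (m d k : ℕ) :
    Sspec q (d + k + 1) (hookLam m k) t =
      (∏ i ∈ range d, (t ^ q ^ (d + k + m) - t ^ q ^ i) / (t ^ q ^ d - t ^ q ^ i)) *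
        ∏ i ∈ range k,
          (t ^ q ^ (d + k + m) - t ^ q ^ (d + i + 1)) / (t ^ q ^ (d + i + 1) - t ^ q ^ d) :=
  (Sspec_eq_div _ _ _ _).trans <| vandermondeProd_comp_div_vandermondeProd ht
    (e := fun j => hookLam m k (d + k + 1 - j) + j) (fun _ hj => hookLam_add_of_lt hj)
    (hookLam_add_last m d k)

lemma injective_pow_pow_pow {M : Type*} [Monoid M] {q : ℕ} {t : M}
    (ht : Function.Injective fun a => t ^ q ^ a) (d : ℕ) :
    Function.Injective fun a => (t ^ q ^ d) ^ q ^ a := by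
  simpa only [Function.comp_def, ← pow_mul, ← pow_add] using ht.comp (add_right_injective d)

lemma Sspec_hookLam_eq_mul {q : ℕ} {t : RatFunc ℚ} (ht : Function.Injective fun a => t ^ q ^ a)
    (m d k : ℕ) :
    Sspec q (d + k + 1) (hookLam m k) t =
      (∏ i ∈ range d, (t ^ q ^ (d + k + m) - t ^ q ^ i) / (t ^ q ^ d - t ^ q ^ i)) *
        Sspec q (k + 1) (hookLam m k) (t ^ q ^ d) := by
  have hk := Sspec_hookLam (injective_pow_pow_pow ht d) m 0 k
  simp only [← pow_mul, ← pow_add, zero_add, prod_range_zero, one_mul, add_zero] at hk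
  rw [hk, Sspec_hookLam ht]
  simp only [add_assoc]

lemma RatFunc.injective_X_pow_pow {K : Type*} [Field K] {q : ℕ} (hq : 2 ≤ q) :
    Function.Injective fun a => (RatFunc.X : RatFunc K) ^ q ^ a := by
  have hX : (fun n : ℕ => (RatFunc.X : RatFunc K) ^ n) =
      algebraMap (Polynomial K) (RatFunc K) ∘ fun n => Polynomial.X ^ n := by
    ext n
    simp [RatFunc.algebraMap_X]
  have hXpow : Function.Injective fun n : ℕ => (RatFunc.X : RatFunc K) ^ n := by
    rw [hX]
    exact (RatFunc.algebraMap_injective K).comp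
      (pow_injective_of_not_isUnit Polynomial.not_isUnit_X Polynomial.X_ne_zero)
  exact hXpow.comp (Nat.pow_right_injective hq)

lemma pow_sub_pow_div_pow_sub_pow {K : Type*} [Field K] {t : K} (ht : t ≠ 0) {a b c : ℕ}
    (hca : c ≤ a) (hcb : c ≤ b) :
    (t ^ a - t ^ c) / (t ^ b - t ^ c) = (1 - t ^ (a - c)) / (1 - t ^ (b - c)) := by
  rw [← pow_mul_pow_sub t hca, ← pow_mul_pow_sub t hcb, ← mul_sub_one, ← mul_sub_one,
    mul_div_mul_left _ _ (pow_ne_zero c ht), ← neg_div_neg_eq, neg_sub, neg_sub]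

lemma qtbin_eq_prod {q : ℕ} (hq : 1 ≤ q) {N d : ℕ} (hd : d ≤ N) {t : RatFunc ℚ}
    (ht : t ≠ 0) :
    qtbin q N d t = ∏ i ∈ range d, (t ^ q ^ N - t ^ q ^ i) / (t ^ q ^ d - t ^ q ^ i) :=
  prod_congr rfl fun i hi => by
    have hid := (mem_range.mp hi).le
    rw [pow_sub_pow_div_pow_sub_pow ht (Nat.pow_le_pow_right hq (hid.trans hd))
      (Nat.pow_le_pow_right hq hid)]

theorem hook_specialization_factorization_general (q m k n : ℕ) (hq : 2 ≤ q) (hk : k ≤ n) :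
    Sspec q (n + 1) (hookLam m k) RatFunc.X
        = qtbin q (n + m) (n - k) RatFunc.X *
            ∏ i ∈ Finset.range k,
              (((RatFunc.X : RatFunc ℚ) ^ q ^ (n - k)) ^ q ^ (m + k)
                  - (RatFunc.X ^ q ^ (n - k)) ^ q ^ (i + 1))
                / ((RatFunc.X ^ q ^ (n - k)) ^ q ^ (i + 1) - RatFunc.X ^ q ^ (n - k)) ∧
      Sspec q (n + 1) (hookLam m k) RatFunc.X
        = qtbin q (n + m) (n - k) RatFunc.X *
            Sspec q (k + 1) (hookLam m k) (RatFunc.X ^ q ^ (n - k)) := by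
  obtain ⟨d, rfl⟩ : ∃ d, n = d + k := ⟨n - k, by omega⟩
  have hX := RatFunc.injective_X_pow_pow (K := ℚ) hq
  have hsplit : Sspec q (d + k + 1) (hookLam m k) RatFunc.X =
      qtbin q (d + k + m) d RatFunc.X * Sspec q (k + 1) (hookLam m k) (RatFunc.X ^ q ^ d) := by
    rw [Sspec_hookLam_eq_mul hX, qtbin_eq_prod (by omega) (by omega) RatFunc.X_ne_zero]
  have hhook := Sspec_hookLam (injective_pow_pow_pow hX d) m 0 k
  simp only [zero_add, prod_range_zero, one_mul, pow_zero, pow_one, add_comm k m] at hhook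
  rw [Nat.add_sub_cancel]
  exact ⟨hsplit.trans (by rw [hhook]), hsplit⟩

/-- For `n ≥ k ≥ 0` and `m ≥ 1`, the hook principal specialization factors as
`S_{(m,1^k)}(1,…,t^n) = [n+m choose n-k]_{q,t} · φ^{n-k}(∏_{i=1}^{k} (t^{q^{m+k}} - t^{q^i})/(t^{q^i} - t))`,
and in particular `S_{(m,1^k)}(1,…,t^n) = [n+m choose n-k]_{q,t} · φ^{n-k}(S_{(m,1^k)}(1,…,t^k))`,
where `φ^{n-k}` substitutes `t ↦ t^{q^{n-k}}`. -/
theorem hook_specialization_factorization (q m k n : ℕ) (hq : 2 ≤ q) (hm : 1 ≤ m)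
    (hk : k ≤ n) :
    Sspec q (n + 1) (hookLam m k) RatFunc.X
        = qtbin q (n + m) (n - k) RatFunc.X *
            ∏ i ∈ Finset.range k,
              (((RatFunc.X : RatFunc ℚ) ^ q ^ (n - k)) ^ q ^ (m + k)
                  - (RatFunc.X ^ q ^ (n - k)) ^ q ^ (i + 1))
                / ((RatFunc.X ^ q ^ (n - k)) ^ q ^ (i + 1) - RatFunc.X ^ q ^ (n - k)) ∧
      Sspec q (n + 1) (hookLam m k) RatFunc.X
        = qtbin q (n + m) (n - k) RatFunc.X *
            Sspec q (k + 1) (hookLam m k) (RatFunc.X ^ q ^ (n - k)) :=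
  hook_specialization_factorization_general q m k n hq hk
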